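/- Any finite connected graph that admits a Hamilton path is stackable, i.e., for every vertex t, starting from one cup on each vertex of G, there is a sequence of legal stacking moves that stacks all cups onto t. -/

import Mathlib

/-- A legal cup-stacking move in the graph `G`: all `r` cups on `x` are moved to a
vertex `y ≠ x` carrying at least one cup, provided the graph distance `d(x,y) = r`. -/
def CupStep {V : Type*} [DecidableEq V] (G : SimpleGraph V) (c c' : V → ℕ) : Prop :=
  ∃ x y : V, x ≠ y ∧ 0 < c x ∧ 0 < c y ∧ G.dist x y = c x ∧
    c' = Function.update (Function.update c x 0) y (c y + c x)

/-- `G` is `t`-stackable: starting from one cup on each vertex, some sequence of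
legal moves stacks all cups onto `t`. -/
def TStackable {V : Type*} [DecidableEq V] (G : SimpleGraph V) (t : V) : Prop :=
  ∃ c : V → ℕ, Relation.ReflTransGen (CupStep G) (fun _ => 1) c ∧ ∀ v, v ≠ t → c v = 0

/-!
Run the game backwards: undoing a move splits `r` cups off a stack onto an empty vertex at
distance `r`. By strong induction on `m`, a stack of more than `m` cups at `y` can be spread, one
cup each, over an empty path `y = v 0, v 1, …, v m` of `G`: with `d = dist y (v m) ≤ m`, split `d`
cups onto `v m`, let it spread its `d - 1` spare cups back over `v (m - 1), …, v (m - d + 1)`,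
and let `y` spread the rest over `v 1, …, v (m - d)`. Starting from all cups on `t`, spreading
along both halves of the Hamilton path from `t` reaches the configuration with one cup everywhere.
-/

open Function Relation

section Spread

variable {V : Type*} {G : SimpleGraph V}

theorem SimpleGraph.isChain_adj_reverse {l : List V} (h : l.IsChain G.Adj) :
    l.reverse.IsChain G.Adj :=
  List.isChain_reverse.2 (h.imp fun _ _ h => h.symm)

theorem SimpleGraph.exists_append_length_add_one_eq_dist {y z : V} {K : List V} (hyz : y ≠ z)
    (h : (y :: (K ++ [z])).IsChain G.Adj) : ∃ A B, K = A ++ B ∧ B.length + 1 = G.dist y z := by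
  have hz : (y :: (K ++ [z])).getLast (List.cons_ne_nil _ _) = z := by
    rw [List.getLast_cons (by simp), List.getLast_append_singleton]
  let p : G.Walk y z := (Walk.ofSupport _ _ h).copy rfl hz
  have hp : p.length = K.length + 1 :=
    (Walk.length_copy _ _ _).trans (by rw [Walk.length_ofSupport]; simp)
  have hd : 0 < G.dist y z := p.reachable.pos_dist_of_ne hyz
  have hdK : G.dist y z ≤ K.length + 1 := hp ▸ G.dist_le p
  exact ⟨K.take (K.length + 1 - G.dist y z), K.drop (K.length + 1 - G.dist y z),
    (K.take_append_drop _).symm, by simp; omega⟩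

variable [DecidableEq V]

theorem CupStep.of_split {c : V → ℕ} {x y : V} {r : ℕ} (hxy : x ≠ y) (hr : 0 < r)
    (hd : G.dist x y = r) (hx : c x = 0) (hy : r < c y) :
    CupStep G (update (update c x r) y (c y - r)) c := by
  refine ⟨x, y, hxy, by simpa [hxy], by simp; omega, by simpa [hxy], ?_⟩
  ext v
  by_cases hvy : v = y <;> by_cases hvx : v = x <;> simp_all; omega

def spread (c : V → ℕ) (y : V) (L : List V) : V → ℕ :=
  fun v => if v = y then c y - L.length else if v ∈ L then 1 else c v

theorem spread_nil (c : V → ℕ) (y : V) : spread c y [] = c := by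
  ext v; by_cases h : v = y <;> simp [spread, h]

theorem spread_append_append_singleton (c : V → ℕ) {y z : V} {A B : List V} (hyz : y ≠ z)
    (hyA : y ∉ A) (hyB : y ∉ B) (hzA : z ∉ A) (hzB : z ∉ B) :
    spread c y (A ++ B ++ [z]) =
      spread (spread (update (update c z (B.length + 1)) y (c y - (B.length + 1))) z B.reverse)
        y A := by
  ext v
  by_cases hvy : v = y
  · subst hvy; simp [spread, hyz, hyB]; omega
  by_cases hvz : v = z
  · subst hvz; simp [spread, hvy, hzA, hzB]
  by_cases hvA : v ∈ A <;> simp [spread, hvy, hvz, hvA]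

theorem reflTransGen_cupStep_spread {L : List V} {y : V} {c : V → ℕ}
    (hchain : (y :: L).IsChain G.Adj) (hnodup : (y :: L).Nodup) (hy : L.length < c y)
    (hL : ∀ p ∈ L, c p = 0) : ReflTransGen (CupStep G) (spread c y L) c := by
  induction hn : L.length using Nat.strong_induction_on generalizing L y c with
  | _ n ih =>
  obtain rfl | ⟨K, z, rfl⟩ := L.eq_nil_or_concat'
  · rw [spread_nil]
  have hyz : y ≠ z := fun h => (List.nodup_cons.1 hnodup).1 (by simp [h])
  obtain ⟨A, B, rfl, hBlen⟩ := G.exists_append_length_add_one_eq_dist hyz hchain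
  simp only [List.length_append, List.length_singleton] at hn hy
  simp only [List.mem_append, List.mem_singleton] at hL
  simp only [List.nodup_cons, List.nodup_append, List.mem_append, List.mem_singleton,
    List.not_mem_nil, List.nodup_nil] at hnodup
  obtain ⟨hyABz, ⟨hA, hB, hAB⟩, -, hzAB⟩ := hnodup
  push Not at hyABz
  obtain ⟨⟨hyA, hyB⟩, -⟩ := hyABz
  have hzA : z ∉ A := fun h => hzAB z (.inl h) z rfl rfl
  have hzB : z ∉ B := fun h => hzAB z (.inr h) z rfl rfl
  have hchainA : (y :: A).IsChain G.Adj := hchain.prefix (by simp)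
  have hchainB : (z :: B.reverse).IsChain G.Adj := by
    simpa using G.isChain_adj_reverse (hchain.suffix (l₁ := B ++ [z]) (by simp))
  rw [spread_append_append_singleton c hyz hyA hyB hzA hzB]
  set c₁ := update (update c z (B.length + 1)) y (c y - (B.length + 1))
  have h₁ : CupStep G c₁ c :=
    CupStep.of_split hyz.symm (by omega) (G.dist_comm.trans hBlen.symm) (hL z (by simp))
      (by omega)
  have h₂ : ReflTransGen (CupStep G) (spread c₁ z B.reverse) c₁ := by
    refine ih B.length (by omega) (L := B.reverse) (c := c₁) hchainB (by simp [hzB, hB])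
      (by simp [c₁, hyz.symm]) ?_ (by simp)
    intro v hv
    rw [List.mem_reverse] at hv
    simp [c₁, ne_of_mem_of_not_mem hv hyB, ne_of_mem_of_not_mem hv hzB, hL v (.inl (.inr hv))]
  have h₃ : ReflTransGen (CupStep G) (spread (spread c₁ z B.reverse) y A)
      (spread c₁ z B.reverse) := by
    refine ih A.length (by omega) hchainA (by simp [hyA, hA])
      (by simp [spread, c₁, hyz, hyB]; omega) ?_ rfl
    intro v hv
    have hvB : v ∉ B := fun h => hAB v hv v h rfl
    simp [spread, c₁, ne_of_mem_of_not_mem hv hyA, ne_of_mem_of_not_mem hv hzA, hvB,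
      hL v (.inl (.inl hv))]
  exact h₃.trans (h₂.tail h₁)

theorem tStackable_of_isChain_of_nodup {l : List V} (hchain : l.IsChain G.Adj) (hnodup : l.Nodup)
    (hl : ∀ v, v ∈ l) (t : V) : TStackable G t := by
  obtain ⟨S₁, S₂, rfl⟩ := List.append_of_mem (hl t)
  have hchain₂ : (t :: S₂).IsChain G.Adj := hchain.suffix (by simp)
  have hchain₁ : (t :: S₁.reverse).IsChain G.Adj := by
    simpa using G.isChain_adj_reverse (hchain.prefix (l₁ := S₁ ++ [t]) (by simp))
  simp only [List.nodup_append, List.nodup_cons, List.mem_cons] at hnodup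
  obtain ⟨hS₁, ⟨htS₂, hS₂⟩, hS₁S₂⟩ := hnodup
  have htS₁ : t ∉ S₁ := fun h => hS₁S₂ t h t (.inl rfl) rfl
  set c₀ : V → ℕ := Pi.single t (S₁.length + S₂.length + 1)
  have h₂ : ReflTransGen (CupStep G) (spread c₀ t S₂) c₀ := by
    refine reflTransGen_cupStep_spread hchain₂ (by simp [htS₂, hS₂]) (by simp [c₀]) ?_
    intro v hv
    simp [c₀, ne_of_mem_of_not_mem hv htS₂]
  have h₁ : ReflTransGen (CupStep G) (spread (spread c₀ t S₂) t S₁.reverse) (spread c₀ t S₂) := by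
    refine reflTransGen_cupStep_spread hchain₁ (by simp [htS₁, hS₁])
      (by simp [spread, c₀]; omega) ?_
    intro v hv
    rw [List.mem_reverse] at hv
    have hvS₂ : v ∉ S₂ := fun h => hS₁S₂ v hv v (.inr h) rfl
    simp [spread, c₀, ne_of_mem_of_not_mem hv htS₁, hvS₂]
  have hones : spread (spread c₀ t S₂) t S₁.reverse = fun _ => 1 := by
    ext v
    by_cases hvt : v = t
    · subst hvt; simp [spread, c₀]; omega
    obtain hv | hv : v ∈ S₁ ∨ v ∈ S₂ := by simpa [hvt] using hl v
    · simp [spread, hvt, hv]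
    · have hvS₁ : v ∉ S₁ := fun h => hS₁S₂ v h v (.inr hv) rfl
      simp [spread, hvt, hvS₁, hv]
  exact ⟨c₀, hones ▸ h₁.trans h₂, fun v hv => by simp [c₀, hv]⟩

end Spread

theorem hamilton_path_implies_stackable_general {V : Type*} [DecidableEq V]
    (G : SimpleGraph V)
    (hham : ∃ (a b : V) (P : G.Walk a b), P.IsPath ∧ ∀ v : V, v ∈ P.support) :
    ∀ t : V, TStackable G t := by
  obtain ⟨a, b, P, hP, hsupp⟩ := hham
  exact tStackable_of_isChain_of_nodup P.isChain_adj_support hP.support_nodup hsupp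

theorem hamilton_path_implies_stackable {V : Type*} [Fintype V] [DecidableEq V]
    (G : SimpleGraph V) (hG : G.Connected)
    (hham : ∃ (a b : V) (P : G.Walk a b), P.IsPath ∧ ∀ v : V, v ∈ P.support) :
    ∀ t : V, TStackable G t :=
  hamilton_path_implies_stackable_general G hham
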